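/- arXiv:2511.02391 — 2 statements merged into one kernel-verified Lean document; each statement's English description precedes it below -/
import Mathlib

section
/- Let h be a measurable function with |h(x)| ≤ 1 for all real x, and let N be a standard normal random variable. Then the function f(x) = e^{x²/2} ∫_{-∞}^x (h(y) − E[h(N)]) e^{−y²/2} dy is the unique bounded solution of Stein's equation f'(x) − x f(x) = h(x) − E[h(N)], and it satisfies ‖f‖_∞ ≤ √(2π) and ‖f'‖_∞ ≤ 4. -/
open MeasureTheory ProbabilityTheory Real Filter
open scoped ENNReal NNReal Topology

/-!
Write `ψ = h - E[h(N)]`. Then `(e^{-x²/2} f)' = ψ e^{-x²/2}`, and `∫ ψ e^{-y²/2} = 0` because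
`E[h(N)]` is the Gaussian mean of `h`, so the integral defining `f x` may be taken over `(x, ∞)`
instead of `(-∞, x]`. Integrating over the tail away from the origin, `|ψ| ≤ 2` and the Gaussian
tail estimates `∫_t^∞ e^{-y²/2} ≤ √(π/2) e^{-t²/2}` and `t ∫_t^∞ e^{-y²/2} ≤ e^{-t²/2}` (`t ≥ 0`)
give `|f| ≤ √(2π)` and `|x f| ≤ 2`, hence `|f'| = |ψ + x f| ≤ 4` wherever the Lebesgue
differentiation theorem provides `f'`. If `g` is a bounded solution, `g e^{-x²/2}` is a primitive
of `ψ e^{-x²/2}` that vanishes at `-∞`, so it equals `∫_{-∞}^x ψ e^{-y²/2}`, i.e. `g = f`.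
-/

open Set

lemma integrable_exp_neg_sq_div_two : Integrable fun y : ℝ => exp (-y ^ 2 / 2) := by
  simpa [neg_div, div_eq_inv_mul, mul_comm] using
    integrable_exp_neg_mul_sq (b := 1 / 2) (by norm_num)

lemma integrable_mul_exp_neg_sq_div_two : Integrable fun y : ℝ => y * exp (-y ^ 2 / 2) := by
  simpa [neg_div, div_eq_inv_mul, mul_comm] using
    integrable_mul_exp_neg_mul_sq (b := 1 / 2) (by norm_num)

lemma integral_exp_neg_sq_div_two : ∫ y : ℝ, exp (-y ^ 2 / 2) = √(2 * π) := by
  have := integral_gaussian (1 / 2)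
  simp_all [div_eq_inv_mul, mul_comm]

lemma integral_Ioi_zero_exp_neg_sq_div_two :
    ∫ y in Ioi (0 : ℝ), exp (-y ^ 2 / 2) = √(2 * π) / 2 := by
  have := integral_gaussian_Ioi (1 / 2)
  simp_all [div_eq_inv_mul, mul_comm]

lemma exp_sq_div_two_mul_exp_neg_sq_div_two (x : ℝ) :
    exp (x ^ 2 / 2) * exp (-x ^ 2 / 2) = 1 := by
  rw [← exp_add, neg_div, add_neg_cancel, exp_zero]

lemma tendsto_exp_neg_sq_div_two_cocompact :
    Tendsto (fun x : ℝ => exp (-x ^ 2 / 2)) (cocompact ℝ) (𝓝 0) := by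
  have hsq := ((tendsto_pow_atTop two_ne_zero).comp
    (tendsto_norm_cocompact_atTop (E := ℝ))).atTop_div_const (two_pos : (0 : ℝ) < 2)
  simpa [Function.comp_def, neg_div] using
    tendsto_exp_atBot.comp (tendsto_neg_atTop_atBot.comp hsq)

lemma integral_Ioi_comp_sub_right {E : Type*} [NormedAddCommGroup E] [NormedSpace ℝ E]
    (g : ℝ → E) (t : ℝ) : ∫ y in Ioi t, g (y - t) = ∫ u in Ioi 0, g u := by
  have := (measurePreserving_sub_right volume t).setIntegral_preimage_emb
    (measurableEmbedding_subRight t) g (Ioi 0)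
  simpa using this

lemma integral_Ioi_exp_neg_sq_div_two_le {t : ℝ} (ht : 0 ≤ t) :
    ∫ y in Ioi t, exp (-y ^ 2 / 2) ≤ √(2 * π) / 2 * exp (-t ^ 2 / 2) := by
  calc ∫ y in Ioi t, exp (-y ^ 2 / 2)
      ≤ ∫ y in Ioi t, exp (-t ^ 2 / 2) * exp (-(y - t) ^ 2 / 2) := by
        refine setIntegral_mono_on integrable_exp_neg_sq_div_two.integrableOn
          ((integrable_exp_neg_sq_div_two.comp_sub_right t).const_mul _).integrableOn
          measurableSet_Ioi fun y (hy : t < y) => ?_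
        -- `y² ≥ t² + (y - t)²` for `y ≥ t ≥ 0`
        rw [← exp_add, exp_le_exp]
        nlinarith
    _ = √(2 * π) / 2 * exp (-t ^ 2 / 2) := by
        rw [integral_const_mul, integral_Ioi_comp_sub_right (fun u => exp (-u ^ 2 / 2)),
          integral_Ioi_zero_exp_neg_sq_div_two, mul_comm]

lemma integral_Ioi_mul_exp_neg_sq_div_two (t : ℝ) :
    ∫ y in Ioi t, y * exp (-y ^ 2 / 2) = exp (-t ^ 2 / 2) := by
  have hderiv : ∀ y ∈ Ici t,
      HasDerivAt (fun y => -exp (-y ^ 2 / 2)) (y * exp (-y ^ 2 / 2)) y := fun y _ =>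
    ((hasDerivAt_pow 2 y).neg.div_const 2).exp.neg.congr_deriv (by simp only [Pi.neg_apply]; ring)
  have hlim : Tendsto (fun y : ℝ => -exp (-y ^ 2 / 2)) atTop (𝓝 (-0)) :=
    (tendsto_exp_neg_sq_div_two_cocompact.mono_left atTop_le_cocompact).neg
  rw [integral_Ioi_of_hasDerivAt_of_tendsto' hderiv
    integrable_mul_exp_neg_sq_div_two.integrableOn hlim]
  ring

lemma mul_integral_Ioi_exp_neg_sq_div_two_le (t : ℝ) :
    t * ∫ y in Ioi t, exp (-y ^ 2 / 2) ≤ exp (-t ^ 2 / 2) := by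
  rw [← integral_Ioi_mul_exp_neg_sq_div_two, ← integral_const_mul]
  refine setIntegral_mono_on (integrable_exp_neg_sq_div_two.const_mul t).integrableOn
    integrable_mul_exp_neg_sq_div_two.integrableOn measurableSet_Ioi fun y (hy : t < y) => ?_
  exact mul_le_mul_of_nonneg_right hy.le (exp_pos _).le

lemma ae_hasDerivAt_integral_Iic {E : Type*} [NormedAddCommGroup E] [NormedSpace ℝ E]
    [CompleteSpace E] {φ : ℝ → E} (hφ : Integrable φ) :
    ∀ᵐ x, HasDerivAt (fun x => ∫ y in Iic x, φ y) (φ x) x := by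
  filter_upwards [LocallyIntegrable.ae_hasDerivAt_integral hφ.locallyIntegrable] with x hx
  refine ((hx 0).const_add (∫ y in Iic 0, φ y)).congr_of_eventuallyEq (.of_forall fun z => ?_)
  dsimp only
  rw [← intervalIntegral.integral_Iic_sub_Iic hφ.integrableOn hφ.integrableOn, add_sub_cancel]

lemma abs_integral_Iic_le_integral_Ioi_abs {φ w : ℝ → ℝ} (hφ : Integrable φ)
    (hφ_zero : ∫ y, φ y = 0) (hw : Integrable w) (hw_even : ∀ y, w (-y) = w y)
    (hφw : ∀ y, |φ y| ≤ w y) (x : ℝ) :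
    |∫ y in Iic x, φ y| ≤ ∫ y in Ioi |x|, w y := by
  rcases le_or_gt 0 x with hx | hx
  · have hsplit := integral_add_compl (measurableSet_Iic (a := x)) hφ
    rw [compl_Iic, hφ_zero, add_eq_zero_iff_eq_neg] at hsplit
    rw [hsplit, abs_neg, abs_of_nonneg hx]
    exact norm_integral_le_of_norm_le (f := φ) hw.integrableOn (.of_forall hφw)
  · calc |∫ y in Iic x, φ y| ≤ ∫ y in Iic x, w y :=
          norm_integral_le_of_norm_le (f := φ) hw.integrableOn (.of_forall hφw)
      _ = ∫ y in Ioi |x|, w y := by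
          rw [abs_of_neg hx, ← integral_comp_neg_Iic]
          simp only [hw_even]

noncomputable def steinSolution (ψ : ℝ → ℝ) (x : ℝ) : ℝ :=
  exp (x ^ 2 / 2) * ∫ y in Iic x, ψ y * exp (-y ^ 2 / 2)

lemma ae_hasDerivAt_steinSolution {ψ : ℝ → ℝ}
    (hψ : Integrable fun y => ψ y * exp (-y ^ 2 / 2)) :
    ∀ᵐ x, HasDerivAt (steinSolution ψ) (ψ x + x * steinSolution ψ x) x := by
  filter_upwards [ae_hasDerivAt_integral_Iic hψ] with x hx
  refine (((hasDerivAt_pow 2 x).div_const 2).exp.mul hx).congr_deriv ?_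
  simp only [steinSolution]
  linear_combination ψ x * exp_sq_div_two_mul_exp_neg_sq_div_two x

lemma eq_steinSolution_of_hasDerivAt {ψ g : ℝ → ℝ}
    (hψ : Integrable fun y => ψ y * exp (-y ^ 2 / 2)) (hg_bdd : ∃ C, ∀ x, |g x| ≤ C)
    (hg : ∀ x, HasDerivAt g (ψ x + x * g x) x) : g = steinSolution ψ := by
  obtain ⟨C, hC⟩ := hg_bdd
  have hG : ∀ x, HasDerivAt (fun x => exp (-x ^ 2 / 2) * g x) (ψ x * exp (-x ^ 2 / 2)) x :=
    fun x => (((hasDerivAt_pow 2 x).neg.div_const 2).exp.mul (hg x)).congr_deriv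
      (by simp only [Pi.neg_apply]; ring)
  have hG_lim : Tendsto (fun x => exp (-x ^ 2 / 2) * g x) atBot (𝓝 0) :=
    (tendsto_exp_neg_sq_div_two_cocompact.mono_left
      atBot_le_cocompact).zero_mul_isBoundedUnder_le ⟨C, eventually_map.2 (.of_forall hC)⟩
  funext x
  rw [steinSolution,
    integral_Iic_of_hasDerivAt_of_tendsto' (fun y _ => hG y) hψ.integrableOn hG_lim, sub_zero,
    ← mul_assoc, exp_sq_div_two_mul_exp_neg_sq_div_two, one_mul]

lemma abs_steinSolution_le_mul_integral_Ioi {ψ : ℝ → ℝ} {M : ℝ}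
    (hψ : Integrable fun y => ψ y * exp (-y ^ 2 / 2))
    (hψ_zero : ∫ y, ψ y * exp (-y ^ 2 / 2) = 0)
    (hψM : ∀ y, |ψ y| ≤ M) (x : ℝ) :
    |steinSolution ψ x| ≤ M * (exp (x ^ 2 / 2) * ∫ y in Ioi |x|, exp (-y ^ 2 / 2)) := by
  have hw_even : ∀ y : ℝ, M * exp (-(-y) ^ 2 / 2) = M * exp (-y ^ 2 / 2) := by simp
  have hψw : ∀ y, |ψ y * exp (-y ^ 2 / 2)| ≤ M * exp (-y ^ 2 / 2) := fun y => by
    rw [abs_mul, abs_of_pos (exp_pos _)]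
    exact mul_le_mul_of_nonneg_right (hψM y) (exp_pos _).le
  have hbound := abs_integral_Iic_le_integral_Ioi_abs hψ hψ_zero
    (integrable_exp_neg_sq_div_two.const_mul M) hw_even hψw x
  rw [integral_const_mul] at hbound
  rw [steinSolution, abs_mul, abs_of_pos (exp_pos _), mul_left_comm]
  exact mul_le_mul_of_nonneg_left hbound (exp_pos _).le

lemma abs_steinSolution_le {ψ : ℝ → ℝ} {M : ℝ}
    (hψ : Integrable fun y => ψ y * exp (-y ^ 2 / 2))
    (hψ_zero : ∫ y, ψ y * exp (-y ^ 2 / 2) = 0)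
    (hψM : ∀ y, |ψ y| ≤ M) (x : ℝ) :
    |steinSolution ψ x| ≤ M * (√(2 * π) / 2) := by
  have hM : 0 ≤ M := (abs_nonneg _).trans (hψM 0)
  calc |steinSolution ψ x|
      ≤ M * (exp (x ^ 2 / 2) * ∫ y in Ioi |x|, exp (-y ^ 2 / 2)) :=
        abs_steinSolution_le_mul_integral_Ioi hψ hψ_zero hψM x
    _ ≤ M * (exp (x ^ 2 / 2) * (√(2 * π) / 2 * exp (-|x| ^ 2 / 2))) := by
        gcongr
        exact integral_Ioi_exp_neg_sq_div_two_le (abs_nonneg x)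
    _ = M * (√(2 * π) / 2) := by
        rw [sq_abs]
        linear_combination M * (√(2 * π) / 2) * exp_sq_div_two_mul_exp_neg_sq_div_two x

lemma abs_mul_steinSolution_le {ψ : ℝ → ℝ} {M : ℝ}
    (hψ : Integrable fun y => ψ y * exp (-y ^ 2 / 2))
    (hψ_zero : ∫ y, ψ y * exp (-y ^ 2 / 2) = 0)
    (hψM : ∀ y, |ψ y| ≤ M) (x : ℝ) :
    |x * steinSolution ψ x| ≤ M := by
  have hM : 0 ≤ M := (abs_nonneg _).trans (hψM 0)
  calc |x * steinSolution ψ x|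
      ≤ |x| * (M * (exp (x ^ 2 / 2) * ∫ y in Ioi |x|, exp (-y ^ 2 / 2))) := by
        rw [abs_mul]
        gcongr
        exact abs_steinSolution_le_mul_integral_Ioi hψ hψ_zero hψM x
    _ = M * (exp (x ^ 2 / 2) * (|x| * ∫ y in Ioi |x|, exp (-y ^ 2 / 2))) := by ring
    _ ≤ M * (exp (x ^ 2 / 2) * exp (-|x| ^ 2 / 2)) := by
        gcongr
        exact mul_integral_Ioi_exp_neg_sq_div_two_le |x|
    _ = M := by rw [sq_abs, exp_sq_div_two_mul_exp_neg_sq_div_two, mul_one]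

lemma integral_gaussianReal_zero_one (h : ℝ → ℝ) :
    ∫ y, h y ∂gaussianReal 0 1 = (√(2 * π))⁻¹ * ∫ y, h y * exp (-y ^ 2 / 2) := by
  rw [integral_gaussianReal_eq_integral_smul one_ne_zero, ← integral_const_mul]
  congr with y
  simp only [gaussianPDFReal, NNReal.coe_one, mul_one, sub_zero, smul_eq_mul]
  ring

lemma integral_sub_integral_gaussianReal_mul_exp_eq_zero {h : ℝ → ℝ}
    (hh : Integrable fun y => h y * exp (-y ^ 2 / 2)) :
    ∫ y, (h y - ∫ z, h z ∂gaussianReal 0 1) * exp (-y ^ 2 / 2) = 0 := by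
  simp_rw [sub_mul]
  rw [integral_sub hh (integrable_exp_neg_sq_div_two.const_mul _), integral_const_mul,
    integral_exp_neg_sq_div_two, integral_gaussianReal_zero_one]
  field_simp
  ring

/-- The solution of Stein's equation associated with a measurable `h` bounded by 1
is the unique bounded solution, and satisfies `‖f‖_∞ ≤ √(2π)` and `‖f'‖_∞ ≤ 4`. -/
theorem stein_equation_solution_bounds
    (h : ℝ → ℝ) (hmeas : Measurable h) (hbd : ∀ x, |h x| ≤ 1)
    (Eh : ℝ) (hEh : Eh = ∫ y, h y ∂(gaussianReal 0 1))
    (f : ℝ → ℝ)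
    (hf : ∀ x, f x = Real.exp (x ^ 2 / 2) *
      ∫ y in Set.Iic x, (h y - Eh) * Real.exp (-y ^ 2 / 2)) :
    (∀ x, |f x| ≤ Real.sqrt (2 * π)) ∧
    (∀ᵐ x ∂(volume : Measure ℝ),
      ∃ d : ℝ, HasDerivAt f d x ∧ d - x * f x = h x - Eh ∧ |d| ≤ 4) ∧
    (∀ g : ℝ → ℝ, (∃ C : ℝ, ∀ x, |g x| ≤ C) →
      (∀ x, HasDerivAt g (h x - Eh + x * g x) x) → g = f) := by
  have hEh_le : |Eh| ≤ 1 := by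
    simpa [hEh] using
      norm_integral_le_of_norm_le_const (μ := gaussianReal 0 1) (f := h) (.of_forall hbd)
  have hψM : ∀ y, |h y - Eh| ≤ 2 := fun y => (abs_sub _ _).trans (by linarith [hbd y])
  have hψ : Integrable fun y => (h y - Eh) * exp (-y ^ 2 / 2) :=
    integrable_exp_neg_sq_div_two.bdd_mul (hmeas.sub measurable_const).aestronglyMeasurable
      (.of_forall hψM)
  have hψ_zero : ∫ y, (h y - Eh) * exp (-y ^ 2 / 2) = 0 := by
    rw [hEh]
    exact integral_sub_integral_gaussianReal_mul_exp_eq_zero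
      (integrable_exp_neg_sq_div_two.bdd_mul hmeas.aestronglyMeasurable (.of_forall hbd))
  obtain rfl : f = steinSolution (fun y => h y - Eh) := funext hf
  refine ⟨fun x => ?_, ?_, fun g hg_bdd hg => eq_steinSolution_of_hasDerivAt hψ hg_bdd hg⟩
  · linarith [abs_steinSolution_le hψ hψ_zero hψM x]
  · filter_upwards [ae_hasDerivAt_steinSolution hψ] with x hx
    refine ⟨_, hx, add_sub_cancel_right _ _, (abs_add_le _ _).trans ?_⟩
    linarith [hψM x, abs_mul_steinSolution_le hψ hψ_zero hψM x]
end

section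
/- Let X be a real random variable with mean zero, finite variance, density p supported on a connected interval, and Stein kernel τ. Then for any constant b > 0, E[(b ∧ |X|) τ(X)] ≤ E[|X|² (b ∧ |X|)]. -/
/-!
Let `μ` be the law of `X` and `H(x) = ∫_{y > x} y dμ(y)`. On the set of `x` for which
`y ↦ y p(y)` is integrable on `(x, ∞)`, `p` agrees a.e. with a measurable density `ρ` of `μ`,
so `τ = H / ρ` `μ`-a.e. there; off that set the Bochner integral defining `τ` is the junk
value `0`, so `τ = 0`. Since `X` is centred, `H ≥ 0`, hence `τ ≤ H / ρ` `μ`-a.e. and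
`E[w(X) τ(X)] ≤ ∫ w(x) H(x) dx` for `w = b ∧ |·|`.

Again because `X` is centred, `H(x) = E[|X|; 0 ≤ x < X]` for `x ≥ 0` and
`H(x) = E[|X|; X ≤ x < 0]` for `x < 0`. By Tonelli, `∫ w H dx = E[|X| ∫_I w]` with `I` the
half-open interval between `0` and `X`, and `∫_I w ≤ |X| w(X)` because `w` is nondecreasing
in `|x|`.
-/

open MeasureTheory ProbabilityTheory Set
open scoped ENNReal NNReal

theorem mem_Ico_min_max_iff_of_nonneg {x y : ℝ} (hx : 0 ≤ x) :
    x ∈ Ico (min 0 y) (max 0 y) ↔ x < y := by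
  simp only [mem_Ico, min_le_iff, lt_max_iff]; grind

theorem mem_Ico_min_max_iff_of_neg {x y : ℝ} (hx : x < 0) :
    x ∈ Ico (min 0 y) (max 0 y) ↔ y ≤ x := by
  simp only [mem_Ico, min_le_iff, lt_max_iff]; grind

theorem abs_le_abs_of_mem_Ico_min_max {x y : ℝ} (h : x ∈ Ico (min 0 y) (max 0 y)) :
    |x| ≤ |y| := by
  rw [mem_Ico, min_le_iff, lt_max_iff] at h
  rcases le_total 0 x with hx | hx <;> rcases le_total 0 y with hy | hy <;>
    simp only [abs_of_nonneg, abs_of_nonpos, *] <;> grind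

noncomputable def tailMoment (μ : Measure ℝ) (x : ℝ) : ℝ := ∫ y in Ioi x, y ∂μ

namespace tailMoment

variable {μ : Measure ℝ}

@[fun_prop]
theorem measurable [SFinite μ] : Measurable (tailMoment μ) := by
  have h : StronglyMeasurable ({q : ℝ × ℝ | q.1 < q.2}.indicator Prod.snd) :=
    (measurable_snd.indicator (measurableSet_lt measurable_fst measurable_snd)).stronglyMeasurable
  convert (h.integral_prod_right' (ν := μ)).measurable using 1
  exact funext fun x => (integral_indicator measurableSet_Ioi).symm

theorem eq_setIntegral_Iic_neg (hμ : Integrable (fun y => y) μ) (hmean : ∫ y, y ∂μ = 0)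
    (x : ℝ) : tailMoment μ x = ∫ y in Iic x, -y ∂μ := by
  have h := integral_add_compl (measurableSet_Iic (a := x)) hμ
  rw [compl_Iic, hmean] at h
  rw [tailMoment, integral_neg]
  linarith

theorem nonneg (hμ : Integrable (fun y => y) μ) (hmean : ∫ y, y ∂μ = 0) (x : ℝ) :
    0 ≤ tailMoment μ x := by
  rcases le_or_gt 0 x with hx | hx
  · exact setIntegral_nonneg measurableSet_Ioi fun y hy => hx.trans (le_of_lt hy)
  · rw [eq_setIntegral_Iic_neg hμ hmean]
    exact setIntegral_nonneg measurableSet_Iic fun y (hy : y ≤ x) => by linarith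

theorem ofReal_eq_lintegral_indicator (hμ : Integrable (fun y => y) μ) (hmean : ∫ y, y ∂μ = 0)
    (x : ℝ) :
    ENNReal.ofReal (tailMoment μ x)
      = ∫⁻ y, (Ico (min 0 y) (max 0 y)).indicator (fun _ => ENNReal.ofReal |y|) x ∂μ := by
  rcases le_or_gt 0 x with hx | hx
  · have hind : ∀ y, (Ico (min 0 y) (max 0 y)).indicator (fun _ => ENNReal.ofReal |y|) x
        = (Ioi x).indicator (fun y => ENNReal.ofReal y) y := fun y => by
      by_cases hxy : x < y
      · simp [indicator, hxy, mem_Ico_min_max_iff_of_nonneg hx, abs_of_pos (hx.trans_lt hxy)]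
      · simp [indicator, hxy, mem_Ico_min_max_iff_of_nonneg hx]
    rw [lintegral_congr hind, lintegral_indicator measurableSet_Ioi, tailMoment,
      ofReal_integral_eq_lintegral_ofReal hμ.integrableOn
        ((ae_restrict_mem measurableSet_Ioi).mono fun y hy => hx.trans (le_of_lt hy))]
  · have hind : ∀ y, (Ico (min 0 y) (max 0 y)).indicator (fun _ => ENNReal.ofReal |y|) x
        = (Iic x).indicator (fun y => ENNReal.ofReal (-y)) y := fun y => by
      by_cases hyx : y ≤ x
      · simp [indicator, hyx, mem_Ico_min_max_iff_of_neg hx, abs_of_neg (hyx.trans_lt hx)]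
      · simp [indicator, hyx, mem_Ico_min_max_iff_of_neg hx]
    rw [lintegral_congr hind, lintegral_indicator measurableSet_Iic,
      eq_setIntegral_Iic_neg hμ hmean,
      ofReal_integral_eq_lintegral_ofReal (f := fun y => -y) hμ.neg.integrableOn
        ((ae_restrict_mem measurableSet_Iic).mono fun y (hy : y ≤ x) =>
          show (0 : ℝ) ≤ -y by linarith)]

theorem lintegral_ofReal_mul_le [SFinite μ] (hμ : Integrable (fun y => y) μ)
    (hmean : ∫ y, y ∂μ = 0) {w : ℝ → ℝ} (hw : Measurable w) (hw0 : 0 ≤ w)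
    (hmono : ∀ x y, |x| ≤ |y| → w x ≤ w y) :
    ∫⁻ x, ENNReal.ofReal (w x * tailMoment μ x) ≤ ∫⁻ y, ENNReal.ofReal (y ^ 2 * w y) ∂μ := by
  set F : ℝ → ℝ → ℝ≥0∞ := fun x y =>
    {q : ℝ × ℝ | q.1 ∈ Ico (min 0 q.2) (max 0 q.2)}.indicator
      (fun q => ENNReal.ofReal (w q.1) * ENNReal.ofReal |q.2|) (x, y)
  have hF : Measurable (Function.uncurry F) := by
    refine Measurable.indicator (by fun_prop) ?_
    exact (measurableSet_le (by fun_prop) measurable_fst).inter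
      (measurableSet_lt measurable_fst (by fun_prop))
  have hFx : ∀ x y, F x y = (Ico (min 0 y) (max 0 y)).indicator
      (fun x => ENNReal.ofReal (w x) * ENNReal.ofReal |y|) x := fun _ _ => rfl
  have hsplit : ∀ x, ENNReal.ofReal (w x * tailMoment μ x) = ∫⁻ y, F x y ∂μ := fun x => by
    rw [ENNReal.ofReal_mul (hw0 x), ofReal_eq_lintegral_indicator hμ hmean,
      ← lintegral_const_mul' _ _ ENNReal.ofReal_ne_top]
    congr 1 with y
    rw [hFx, indicator_mul_right]
  have hinner : ∀ y, ∫⁻ x, F x y ≤ ENNReal.ofReal (y ^ 2 * w y) := fun y => calc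
    ∫⁻ x, F x y ≤ ∫⁻ x, (Ico (min 0 y) (max 0 y)).indicator
        (fun _ => ENNReal.ofReal (w y) * ENNReal.ofReal |y|) x := by
      refine lintegral_mono fun x => (hFx x y).trans_le (indicator_le_indicator' fun hx => ?_)
      exact mul_le_mul_left (ENNReal.ofReal_le_ofReal
        (hmono x y (abs_le_abs_of_mem_Ico_min_max hx))) _
    _ = ENNReal.ofReal (y ^ 2 * w y) := by
      rw [lintegral_indicator_const measurableSet_Ico, Real.volume_Ico, max_sub_min_eq_abs,
        sub_zero, ← ENNReal.ofReal_mul (hw0 y),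
        ← ENNReal.ofReal_mul (mul_nonneg (hw0 y) (abs_nonneg y)), mul_assoc, mul_comm,
        abs_mul_abs_self, sq]
  calc ∫⁻ x, ENNReal.ofReal (w x * tailMoment μ x)
      = ∫⁻ x, ∫⁻ y, F x y ∂μ := lintegral_congr hsplit
    _ = ∫⁻ y, (∫⁻ x, F x y) ∂μ := lintegral_lintegral_swap hF.aemeasurable
    _ ≤ ∫⁻ y, ENNReal.ofReal (y ^ 2 * w y) ∂μ := lintegral_mono hinner

end tailMoment

theorem exists_measurable_nnreal_withDensity_eq {α : Type*} [MeasurableSpace α]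
    {μ ν : Measure α} [SigmaFinite μ] [SigmaFinite ν] (h : μ ≪ ν) :
    ∃ ρ : α → ℝ≥0, Measurable ρ ∧ μ = ν.withDensity fun x => ρ x := by
  refine ⟨fun x => (μ.rnDeriv ν x).toNNReal, (μ.measurable_rnDeriv ν).ennreal_toNNReal, ?_⟩
  conv_lhs => rw [← Measure.withDensity_rnDeriv_eq μ ν h]
  exact withDensity_congr_ae ((Measure.rnDeriv_lt_top μ ν).mono fun x hx =>
    (ENNReal.coe_toNNReal hx.ne).symm)

theorem lintegral_ofReal_div_le_of_eq_withDensity {α : Type*} [MeasurableSpace α]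
    {μ ν : Measure α} {ρ : α → ℝ≥0} (hρ : Measurable ρ) (hμρ : μ = ν.withDensity fun x => ρ x)
    {f : α → ℝ} (hf : Measurable f) :
    ∫⁻ x, ENNReal.ofReal (f x / ρ x) ∂μ ≤ ∫⁻ x, ENNReal.ofReal (f x) ∂ν := by
  rw [hμρ, lintegral_withDensity_eq_lintegral_mul _ hρ.coe_nnreal_ennreal (by fun_prop)]
  refine lintegral_mono fun x => ?_
  rcases eq_or_ne (ρ x) 0 with h | h
  · simp [h]
  · rw [Pi.mul_apply, ← ENNReal.ofReal_coe_nnreal, ← ENNReal.ofReal_mul (NNReal.coe_nonneg _),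
      mul_div_cancel₀ _ (NNReal.coe_ne_zero.2 h)]

theorem ae_eq_toReal_of_withDensity_ofReal_eq {α : Type*} [MeasurableSpace α] {ν : Measure α}
    [SigmaFinite ν] {p : α → ℝ} (hp : 0 ≤ p) (hpm : AEMeasurable p ν) {ρ : α → ℝ≥0}
    (hρ : Measurable ρ)
    (h : ν.withDensity (fun x => ENNReal.ofReal (p x)) = ν.withDensity fun x => ρ x) :
    p =ᵐ[ν] fun x => (ρ x : ℝ) := by
  refine ((withDensity_eq_iff_of_sigmaFinite hpm.ennreal_ofReal
    hρ.coe_nnreal_ennreal.aemeasurable).1 h).mono fun x hx => ?_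
  rw [← ENNReal.toReal_ofReal (hp x)]
  exact congrArg ENNReal.toReal hx

theorem aemeasurable_of_integrableOn_id_mul {p : ℝ → ℝ} {s : Set ℝ}
    (h : IntegrableOn (fun y => y * p y) s) : AEMeasurable p (volume.restrict s) := by
  refine (h.aestronglyMeasurable.aemeasurable.div measurable_id.aemeasurable).congr ?_
  filter_upwards [ae_restrict_of_ae (Measure.ae_ne volume 0)] with y hy
  exact mul_div_cancel_left₀ (p y) hy

theorem ae_pos_of_eq_withDensity_ofReal {μ : Measure ℝ} {p : ℝ → ℝ} (hp : 0 ≤ p)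
    (hdens : μ = volume.withDensity fun x => ENNReal.ofReal (p x))
    (hpos : MeasurableSet {x | 0 < p x}) : ∀ᵐ x ∂μ, 0 < p x := by
  rw [hdens, ae_iff, show {x | ¬0 < p x} = {x | 0 < p x}ᶜ from rfl,
    withDensity_apply _ hpos.compl]
  refine (setLIntegral_congr_fun hpos.compl fun x (hx : ¬0 < p x) => ?_).trans lintegral_zero
  rw [le_antisymm (not_lt.1 hx) (hp x), ENNReal.ofReal_zero]

section Density

variable {μ : Measure ℝ} {p : ℝ → ℝ} {ρ : ℝ → ℝ≥0}

theorem ae_restrict_Ioi_eq_of_integrableOn (hp : 0 ≤ p)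
    (hdens : μ = volume.withDensity fun x => ENNReal.ofReal (p x)) (hρ : Measurable ρ)
    (hμρ : μ = volume.withDensity fun x => ρ x) {a : ℝ}
    (ha : IntegrableOn (fun y => y * p y) (Ioi a)) :
    p =ᵐ[volume.restrict (Ioi a)] fun y => (ρ y : ℝ) := by
  refine ae_eq_toReal_of_withDensity_ofReal_eq hp (aemeasurable_of_integrableOn_id_mul ha) hρ ?_
  rw [← restrict_withDensity measurableSet_Ioi, ← hdens, hμρ,
    restrict_withDensity measurableSet_Ioi]

theorem setIntegral_Ioi_id_mul_eq_tailMoment (hp : 0 ≤ p)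
    (hdens : μ = volume.withDensity fun x => ENNReal.ofReal (p x)) (hρ : Measurable ρ)
    (hμρ : μ = volume.withDensity fun x => ρ x) {a : ℝ}
    (ha : IntegrableOn (fun y => y * p y) (Ioi a)) :
    ∫ y in Ioi a, y * p y = tailMoment μ a := calc
  ∫ y in Ioi a, y * p y = ∫ y in Ioi a, ρ y • y :=
      integral_congr_ae ((ae_restrict_Ioi_eq_of_integrableOn hp hdens hρ hμρ ha).mono
        fun y (hy : p y = ρ y) => show y * p y = ρ y • y by
          rw [hy, NNReal.smul_def, smul_eq_mul, mul_comm])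
  _ = ∫ y, y ∂(volume.restrict (Ioi a)).withDensity fun y => ρ y :=
      (integral_withDensity_eq_integral_smul hρ _).symm
  _ = tailMoment μ a := by rw [← restrict_withDensity measurableSet_Ioi, ← hμρ, tailMoment]

theorem ae_eq_of_integrableOn_Ioi (hp : 0 ≤ p)
    (hdens : μ = volume.withDensity fun x => ENNReal.ofReal (p x)) (hρ : Measurable ρ)
    (hμρ : μ = volume.withDensity fun x => ρ x) :
    ∀ᵐ x ∂μ, IntegrableOn (fun y => y * p y) (Ioi x) → p x = ρ x := by
  set U := {x | IntegrableOn (fun y => y * p y) (Ioi x)}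
  have hU : IsUpperSet U := fun a c hac ha => ha.mono_set (Ioi_subset_Ioi hac)
  have hUae : ∀ᵐ x ∂volume.restrict U, p x = ρ x :=
    ae_restrict_of_ae_restrict_inter_Ioo fun a _ ha _ _ =>
      ae_restrict_of_ae_restrict_of_subset (fun x hx => hx.2.1)
        (ae_restrict_Ioi_eq_of_integrableOn hp hdens hρ hμρ ha)
  rw [hμρ]
  exact (withDensity_absolutelyContinuous _ _).ae_le
    ((ae_restrict_iff' hU.ordConnected.measurableSet).1 hUae)

theorem ae_le_tailMoment_div (hp : 0 ≤ p)
    (hdens : μ = volume.withDensity fun x => ENNReal.ofReal (p x))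
    (hpos : MeasurableSet {x | 0 < p x}) (hρ : Measurable ρ)
    (hμρ : μ = volume.withDensity fun x => ρ x) (hμ : Integrable (fun y => y) μ)
    (hmean : ∫ y, y ∂μ = 0) {τ : ℝ → ℝ}
    (hτ : ∀ x, 0 < p x → τ x = (∫ y in Ioi x, y * p y) / p x) :
    ∀ᵐ x ∂μ, τ x ≤ tailMoment μ x / ρ x := by
  filter_upwards [ae_pos_of_eq_withDensity_ofReal hp hdens hpos,
    ae_eq_of_integrableOn_Ioi hp hdens hρ hμρ] with x hpx hpρ
  rw [hτ x hpx]
  by_cases hx : IntegrableOn (fun y => y * p y) (Ioi x)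
  · rw [setIntegral_Ioi_id_mul_eq_tailMoment hp hdens hρ hμρ hx, hpρ hx]
  · rw [integral_undef hx, zero_div]
    exact div_nonneg (tailMoment.nonneg hμ hmean x) (NNReal.coe_nonneg _)

end Density

theorem integral_le_toReal_lintegral_ofReal {α : Type*} [MeasurableSpace α] {μ : Measure α}
    (f : α → ℝ) : ∫ x, f x ∂μ ≤ (∫⁻ x, ENNReal.ofReal (f x) ∂μ).toReal := by
  by_cases hf : Integrable f μ
  · rw [integral_eq_lintegral_pos_part_sub_lintegral_neg_part hf]
    exact sub_le_self _ ENNReal.toReal_nonneg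
  · rw [integral_undef hf]
    exact ENNReal.toReal_nonneg

theorem integral_comp_le_of_ae_le_map {Ω : Type*} [MeasurableSpace Ω] {P : Measure Ω}
    {X : Ω → ℝ} (hX : AEMeasurable X P) {f g h : ℝ → ℝ} (hg : Measurable g)
    (hfg : f ≤ᵐ[P.map X] g)
    (hgh : ∫⁻ x, ENNReal.ofReal (g x) ∂P.map X ≤ ∫⁻ x, ENNReal.ofReal (h x) ∂P.map X)
    (hh : Integrable h (P.map X)) (hh0 : 0 ≤ h) :
    ∫ ω, f (X ω) ∂P ≤ ∫ ω, h (X ω) ∂P := by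
  have hfg' : ∫⁻ ω, ENNReal.ofReal (f (X ω)) ∂P ≤ ∫⁻ x, ENNReal.ofReal (g x) ∂P.map X := by
    rw [lintegral_map' (by fun_prop) hX]
    exact lintegral_mono_ae ((ae_of_ae_map hX hfg).mono fun ω h => ENNReal.ofReal_le_ofReal h)
  calc ∫ ω, f (X ω) ∂P
      ≤ (∫⁻ ω, ENNReal.ofReal (f (X ω)) ∂P).toReal := integral_le_toReal_lintegral_ofReal _
    _ ≤ (∫⁻ x, ENNReal.ofReal (h x) ∂P.map X).toReal :=
      ENNReal.toReal_mono hh.lintegral_lt_top.ne (hfg'.trans hgh)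
    _ = ∫ x, h x ∂P.map X :=
      (integral_eq_lintegral_of_nonneg_ae (ae_of_all _ hh0) hh.aestronglyMeasurable).symm
    _ = ∫ ω, h (X ω) ∂P := integral_map hX hh.aestronglyMeasurable

theorem stein_kernel_min_bound_general
    {Ω : Type*} [MeasureSpace Ω] [IsProbabilityMeasure (ℙ : Measure Ω)]
    (X : Ω → ℝ) (hXmeas : Measurable X)
    (hXsq : Integrable (fun ω => X ω ^ 2) ℙ)
    (hmean : ∫ ω, X ω = 0)
    (p : ℝ → ℝ) (hp : ∀ x, 0 ≤ p x)
    (hdens : Measure.map X ℙ = volume.withDensity (fun x => ENNReal.ofReal (p x)))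
    (hconn : Set.OrdConnected {x | 0 < p x})
    (τ : ℝ → ℝ)
    (hτ : ∀ x, 0 < p x →
      τ x = (∫ y in Set.Ioi x, (y - ∫ ω, X ω) * p y) / p x)
    (b : ℝ) (hb : 0 < b) :
    ∫ ω, min b |X ω| * τ (X ω) ≤ ∫ ω, X ω ^ 2 * min b |X ω| := by
  set μ := Measure.map X ℙ
  have : IsProbabilityMeasure μ := Measure.isProbabilityMeasure_map hXmeas.aemeasurable
  obtain ⟨ρ, hρ, hμρ⟩ := exists_measurable_nnreal_withDensity_eq
    (hdens ▸ withDensity_absolutelyContinuous _ _ : μ ≪ volume)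
  have hsq : Integrable (fun y => y ^ 2) μ :=
    (integrable_map_measure (g := fun y => y ^ 2) (by fun_prop) hXmeas.aemeasurable).2 hXsq
  have hμ : Integrable (fun y => y) μ :=
    ((memLp_two_iff_integrable_sq aestronglyMeasurable_id).2 hsq).integrable one_le_two
  have hmeanμ : ∫ y, y ∂μ = 0 :=
    (integral_map (f := fun y => y) hXmeas.aemeasurable aestronglyMeasurable_id).trans hmean
  have hτμ : ∀ᵐ x ∂μ, τ x ≤ tailMoment μ x / ρ x :=
    ae_le_tailMoment_div hp hdens hconn.measurableSet hρ hμρ hμ hmeanμ fun x hx => by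
      simp only [hτ x hx, hmean, sub_zero]
  set w : ℝ → ℝ := fun x => min b |x|
  have hw0 : 0 ≤ w := fun x => le_min hb.le (abs_nonneg x)
  refine integral_comp_le_of_ae_le_map (f := fun x => w x * τ x) (h := fun y => y ^ 2 * w y)
    hXmeas.aemeasurable (g := fun x => w x * tailMoment μ x / ρ x) (by fun_prop)
    (hτμ.mono fun x hx =>
      (mul_le_mul_of_nonneg_left hx (hw0 x)).trans_eq (mul_div_assoc _ _ _).symm)
    ?_ (hsq.mul_bdd (by fun_prop) (ae_of_all _ fun y =>
      (Real.norm_of_nonneg (hw0 y)).trans_le (min_le_left _ _)))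
    fun y => mul_nonneg (sq_nonneg y) (hw0 y)
  calc ∫⁻ x, ENNReal.ofReal (w x * tailMoment μ x / ρ x) ∂μ
      ≤ ∫⁻ x, ENNReal.ofReal (w x * tailMoment μ x) :=
        lintegral_ofReal_div_le_of_eq_withDensity hρ hμρ (by fun_prop)
    _ ≤ ∫⁻ y, ENNReal.ofReal (y ^ 2 * w y) ∂μ :=
        tailMoment.lintegral_ofReal_mul_le hμ hmeanμ (by fun_prop) hw0 fun x y h =>
          min_le_min_left b h

/-- Bound for the Stein kernel: `E[(b ∧ |X|) τ(X)] ≤ E[|X|² (b ∧ |X|)]`. -/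
theorem stein_kernel_min_bound
    {Ω : Type*} [MeasureSpace Ω] [IsProbabilityMeasure (ℙ : Measure Ω)]
    (X : Ω → ℝ) (hXmeas : Measurable X)
    (hXsq : Integrable (fun ω => X ω ^ 2) ℙ)
    (hmean : ∫ ω, X ω = 0)
    (p : ℝ → ℝ) (hp : ∀ x, 0 ≤ p x)
    (hdens : Measure.map X ℙ = volume.withDensity (fun x => ENNReal.ofReal (p x)))
    (hconn : Set.OrdConnected {x | 0 < p x})
    (τ : ℝ → ℝ)
    (hτ : ∀ x, 0 < p x →
      τ x = (∫ y in Set.Ioi x, (y - ∫ ω, X ω) * p y) / p x)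
    (b : ℝ) (hb : 0 < b)
    (hint : Integrable (fun ω => min b |X ω| * τ (X ω)) ℙ) :
    ∫ ω, min b |X ω| * τ (X ω) ≤ ∫ ω, X ω ^ 2 * min b |X ω| :=
  stein_kernel_min_bound_general X hXmeas hXsq hmean p hp hdens hconn τ hτ b hb
end
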